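/- Let P = (M, m_0, Δ) be a preMealy machine, A a universal coBüchi automaton over Σ = I ∪ O, and k ∈ ℕ. For each state m ∈ M define F*(m) = ⊔ { f ∈ CF(A,k) | ∃u ∈ (IO)*, Post*_P(m_0, u) = m and the run of D(A,k) on u from f_0 ends in f }. Then L(D(A,k)) is P-realizable if and only if for every m ∈ M, F*(m) ∈ W_k^A, i.e. there does not exist m ∈ M with F*(m) ∉ W_k^A. -/

import Mathlib

open scoped Classical

/-- A preMealy machine over input alphabet `I`, output alphabet `O`, with state type `M`. -/
structure PreMealy (I O M : Type) where
  init : M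
  trans : M → I → Option (O × M)

namespace PreMealy

variable {I O M : Type}

/-- One step of a preMealy machine on a pair (input, output): defined iff the transition
on the input is defined and produces exactly the given output. -/
noncomputable def step (P : PreMealy I O M) (m : M) (p : I × O) : Option M :=
  match P.trans m p.1 with
  | some (o, m') => if o = p.2 then some m' else none
  | none => none

/-- Running a preMealy machine on a finite word of (input, output) pairs. -/
noncomputable def runFrom (P : PreMealy I O M) : M → List (I × O) → Option M
  | m, [] => some m
  | m, p :: u =>
    match P.step m p with
    | some m' => runFrom P m' u
    | none => none

/-- The language `L(P)` of finite words in `(I·O)*` accepted by `P`. -/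
def lang (P : PreMealy I O M) : Set (List (I × O)) :=
  { u | (P.runFrom P.init u).isSome }

/-- The ω-language `L_ω(P)`: ω-words all of whose finite prefixes belong to `L(P)`. -/
def omegaLang (P : PreMealy I O M) : Set (ℕ → I × O) :=
  { w | ∀ n : ℕ, ((List.range n).map w) ∈ P.lang }

/-- `P` is a (complete) Mealy machine when its transition function is total. -/
def Total (P : PreMealy I O M) : Prop :=
  ∀ m i, (P.trans m i).isSome

/-- A hole of `P` is a pair (state, input) on which the transition is undefined. -/
def Hole (P : PreMealy I O M) (m : M) (i : I) : Prop :=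
  P.trans m i = none

/-- `Left_p`: the set of finite words reaching state `p` from the initial state. -/
def leftLang (P : PreMealy I O M) (p : M) : Set (List (I × O)) :=
  { u | P.runFrom P.init u = some p }

end PreMealy

/-- `P₁ ⪯ P₂`: `P₁` is a subgraph of `P₂`. -/
def Subgraph {I O M₁ M₂ : Type} (P₁ : PreMealy I O M₁) (P₂ : PreMealy I O M₂) : Prop :=
  ∃ Φ : M₁ → M₂, Function.Injective Φ ∧ Φ P₁.init = P₂.init ∧
    ∀ p i o q, P₁.trans p i = some (o, q) ↔ P₂.trans (Φ p) i = some (o, Φ q)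

/-- `S` is `P`-realizable: some (finite-state, complete) Mealy machine extends `P`
and its ω-language is included in `S ⊆ (I·O)^ω`. -/
def PRealizable {I O M : Type} (P : PreMealy I O M) (S : Set (ℕ → I × O)) : Prop :=
  ∃ (N : Type) (_ : Fintype N) (Mach : PreMealy I O N),
    Mach.Total ∧ Subgraph P Mach ∧ Mach.omegaLang ⊆ S

/-- Quotient (left derivative) of a set of ω-words by a finite word. -/
def wordQuot {α : Type} (u : List α) (S : Set (ℕ → α)) : Set (ℕ → α) :=
  { v | (fun n => if h : n < u.length then u.get ⟨n, h⟩ else v (n - u.length)) ∈ S }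

/-- Interleaving of an ω-word over `I × O` into an ω-word over `Σ = I ⊕ O`. -/
def interleave {I O : Type} (w : ℕ → I × O) : ℕ → I ⊕ O :=
  fun n => if n % 2 = 0 then Sum.inl (w (n / 2)).1 else Sum.inr (w (n / 2)).2

/-- Flattening of a finite word over `I × O` into a word over `Σ = I ⊕ O`. -/
def flattenWord {I O : Type} (u : List (I × O)) : List (I ⊕ O) :=
  u.flatMap fun p => [Sum.inl p.1, Sum.inr p.2]

/-- `P`-realizability of a specification over `Σ = I ⊕ O`. -/
def PRealizableSigma {I O M : Type} (P : PreMealy I O M) (S : Set (ℕ → I ⊕ O)) : Prop :=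
  ∃ (N : Type) (_ : Fintype N) (Mach : PreMealy I O N),
    Mach.Total ∧ Subgraph P Mach ∧ ∀ w ∈ Mach.omegaLang, interleave w ∈ S

/-- Realizability of a specification over `Σ = I ⊕ O` by some Mealy machine. -/
def RealizableSigma (I O : Type) (S : Set (ℕ → I ⊕ O)) : Prop :=
  ∃ (N : Type) (_ : Fintype N) (Mach : PreMealy I O N),
    Mach.Total ∧ ∀ w ∈ Mach.omegaLang, interleave w ∈ S

/-- A universal coBüchi automaton; `col1 q` means state `q` has color 1. -/
structure UCB (σ Q : Type) where
  init : Set Q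
  δ : Q → σ → Set Q
  δ_ne : ∀ q a, (δ q a).Nonempty
  col1 : Q → Prop

namespace UCB

variable {σ Q : Type}

/-- `ρ` is a run of `A` on the ω-word `w`. -/
def Run (A : UCB σ Q) (w : ℕ → σ) (ρ : ℕ → Q) : Prop :=
  ρ 0 ∈ A.init ∧ ∀ n, ρ (n + 1) ∈ A.δ (ρ n) (w n)

/-- `L^∀_k(A)`: every run visits 1-colored states at most `k` times. -/
def langK (A : UCB σ Q) (k : ℕ) : Set (ℕ → σ) :=
  { w | ∀ ρ : ℕ → Q, A.Run w ρ →
      ∀ s : Finset ℕ, (∀ j ∈ s, A.col1 (ρ j)) → s.card ≤ k }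

/-- `L^∀(A)`: every run visits 1-colored states only finitely often. -/
def langForall (A : UCB σ Q) : Set (ℕ → σ) :=
  { w | ∀ ρ : ℕ → Q, A.Run w ρ → { j | A.col1 (ρ j) }.Finite }

/-- A run prefix of `A` on a finite word `p` (only `ρ 0, …, ρ p.length` are relevant). -/
def RunPrefix (A : UCB σ Q) (p : List σ) (ρ : ℕ → Q) : Prop :=
  ρ 0 ∈ A.init ∧ ∀ (j : ℕ) (h : j < p.length), ρ (j + 1) ∈ A.δ (ρ j) (p.get ⟨j, h⟩)

/-- The set of states reachable from a set of states while reading a finite word. -/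
def postSet (A : UCB σ Q) : Set Q → List σ → Set Q
  | S, [] => S
  | S, a :: u => postSet A (⋃ q ∈ S, A.δ q a) u

end UCB

/-- The set `CF(A,k)` of `k`-counting functions, as integer-valued functions. -/
def CFset (Q : Type) (k : ℕ) : Set (Q → ℤ) :=
  { f | ∀ q, -1 ≤ f q ∧ f q ≤ (k : ℤ) + 1 }

/-- The transition function `δ^D` of the determinization `D(A,k)` on counting functions. -/
noncomputable def detTransFun {σ Q : Type} [Fintype Q] (A : UCB σ Q) (k : ℕ)
    (f : Q → ℤ) (a : σ) : Q → ℤ := fun q =>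
  let pred : Finset Q := Finset.univ.filter fun q' => q ∈ A.δ q' a ∧ 0 ≤ f q'
  if h : pred.Nonempty then
    min (pred.sup' h f + (if A.col1 q then 1 else 0)) ((k : ℤ) + 1)
  else -1

/-- The (unique) run of `D(A,k)` on an ω-word `w`, starting from `f`. -/
noncomputable def detRun {σ Q : Type} [Fintype Q] (A : UCB σ Q) (k : ℕ)
    (f : Q → ℤ) (w : ℕ → σ) : ℕ → Q → ℤ
  | 0 => f
  | n + 1 => detTransFun A k (detRun A k f w n) (w n)

/-- The state of `D(A,k)` reached from `f` after reading a finite word. -/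
noncomputable def detPostW {σ Q : Type} [Fintype Q] (A : UCB σ Q) (k : ℕ) :
    (Q → ℤ) → List σ → Q → ℤ
  | f, [] => f
  | f, a :: u => detPostW A k (detTransFun A k f a) u

/-- The initial counting function `f₀` of `D(A,k)`. -/
noncomputable def initCF {σ Q : Type} (A : UCB σ Q) : Q → ℤ := fun q =>
  if q ∈ A.init then (if A.col1 q then 1 else 0) else -1

/-- `L(D(A,k)[f])`: ω-words whose run of `D(A,k)` from `f` never visits an unsafe
counting function (one taking the value `k+1`). -/
def langD {σ Q : Type} [Fintype Q] (A : UCB σ Q) (k : ℕ) (f : Q → ℤ) :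
    Set (ℕ → σ) :=
  { w | ∀ n, ¬ ∃ q, detRun A k f w n q = (k : ℤ) + 1 }

/-- A complete deterministic safety automaton: the set `bad` of unsafe states is a trap. -/
structure DetSafety (σ Q : Type) where
  start : Q
  δ : Q → σ → Q
  bad : Set Q
  trap : ∀ q ∈ bad, ∀ a, δ q a ∈ bad

namespace DetSafety

variable {σ Q : Type}

/-- State reached after reading a finite word. -/
def postW (A : DetSafety σ Q) : Q → List σ → Q
  | q, [] => q
  | q, a :: u => postW A (A.δ q a) u

/-- The run of a deterministic automaton on an ω-word. -/
def runOn (A : DetSafety σ Q) (w : ℕ → σ) : ℕ → Q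
  | 0 => A.start
  | n + 1 => A.δ (runOn A w n) (w n)

/-- The (safety) ω-language: the run never enters an unsafe state. -/
def omegaLang (A : DetSafety σ Q) : Set (ℕ → σ) :=
  { w | ∀ n, runOn A w n ∉ A.bad }

end DetSafety

/-- A complete deterministic automaton (no acceptance condition). -/
structure DetAuto (σ Q : Type) where
  start : Q
  δ : Q → σ → Q

/-- State reached after reading a finite word. -/
def DetAuto.postW {σ Q : Type} (A : DetAuto σ Q) : Q → List σ → Q
  | q, [] => q
  | q, a :: u => DetAuto.postW A (A.δ q a) u

/-- Domination order between collections: every element of `A` is below some element of `B`. -/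
def acLE {α : Type} (r : α → α → Prop) (A B : Set α) : Prop :=
  ∀ x ∈ A, ∃ y ∈ B, r x y

/-- Downward closure of a collection of subsets of `Y`. -/
def dcl {Y : Type} (A : Set (Set Y)) : Set (Set Y) :=
  { X | ∃ X' ∈ A, X ⊆ X' }

/-- The merged relation `U(∼, p)` for a non-congruent point with successors `s, s'`. -/
def Umerge {M : Type} (r : M → M → Prop) (s s' : M) : M → M → Prop :=
  fun y y' => r y y' ∨ (r y s ∧ r y' s') ∨ (r y' s ∧ r y s')

/-- Prefix closure of a set of finite words over `I × O`. -/
def prefsE {I O : Type} (E : Set (List (I × O))) : Set (List (I × O)) :=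
  { u | ∃ e ∈ E, u <+: e }

/-- Consistency of a set of examples: the output is uniquely determined by each
prefix ending with an input. -/
def ConsistentE {I O : Type} (E : Set (List (I × O))) : Prop :=
  ∀ (u : List (I × O)) (i : I) (o o' : O),
    (u ++ [(i, o)]) ∈ prefsE E → (u ++ [(i, o')]) ∈ prefsE E → o = o'

/-- The prefix-tree acceptor `PTA(E)`: states are the prefixes of `E` (together with ε). -/
noncomputable def PTA {I O : Type} (E : Set (List (I × O))) :
    PreMealy I O (↥(insert ([] : List (I × O)) (prefsE E))) where
  init := ⟨[], Set.mem_insert _ _⟩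
  trans := fun u i =>
    if h : ∃ o : O, (u.1 ++ [(i, o)]) ∈ prefsE E then
      some (h.choose, ⟨u.1 ++ [(i, h.choose)], Set.mem_insert_of_mem _ h.choose_spec⟩)
    else none

/-- The fixpoint labelling `F*` of the states of a preMealy machine by counting functions. -/
noncomputable def Fstar {I O M Q : Type} [Fintype Q] (P : PreMealy I O M)
    (A : UCB (I ⊕ O) Q) (k : ℕ) (m : M) : Q → ℤ := fun q =>
  sSup (insert (-1 : ℤ)
    { z | ∃ u ∈ P.leftLang m, detPostW A k (initCF A) (flattenWord u) q = z })

section Stmt15Aux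

open List

variable {I O M Q σ : Type}

/-! ### Basic run lemmas -/

lemma step_eq_some_iff (P : PreMealy I O M) (s : M) (p : I × O) (s' : M) :
    P.step s p = some s' ↔ P.trans s p.1 = some (p.2, s') := by
  unfold PreMealy.step
  cases h : P.trans s p.1 with
  | none => simp
  | some po =>
    obtain ⟨o, m'⟩ := po
    by_cases ho : o = p.2 <;> simp [ho, Prod.ext_iff] <;> tauto

lemma runFrom_append (P : PreMealy I O M) (u v : List (I × O)) :
    ∀ s, P.runFrom s (u ++ v) = (P.runFrom s u).bind (fun t => P.runFrom t v) := by
  induction u with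
  | nil => intro s; simp [PreMealy.runFrom]
  | cons p u ih =>
    intro s
    cases h : P.step s p with
    | none => simp [PreMealy.runFrom, h]
    | some s' => simp [PreMealy.runFrom, h, ih s']

lemma runFrom_singleton (P : PreMealy I O M) (s : M) (p : I × O) :
    P.runFrom s [p] = P.step s p := by
  cases h : P.step s p <;> simp [PreMealy.runFrom, h]

lemma runFrom_take_isSome (P : PreMealy I O M) {s t : M} {u : List (I × O)}
    (h : P.runFrom s u = some t) (n : ℕ) : (P.runFrom s (u.take n)).isSome := by
  have h2 := runFrom_append P (u.take n) (u.drop n) s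
  rw [List.take_append_drop, h] at h2
  cases hh : P.runFrom s (u.take n) with
  | none => rw [hh] at h2; simp at h2
  | some _ => simp

lemma runFrom_of_subgraph {N : Type} {P : PreMealy I O M} {Mc : PreMealy I O N} {Φ : M → N}
    (hΦ : ∀ p i o q, P.trans p i = some (o, q) ↔ Mc.trans (Φ p) i = some (o, Φ q)) :
    ∀ (u : List (I × O)) (s t : M), P.runFrom s u = some t → Mc.runFrom (Φ s) u = some (Φ t) := by
  intro u
  induction u with
  | nil =>
    intro s t h
    simp only [PreMealy.runFrom, Option.some.injEq] at h
    rw [h]; rfl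
  | cons p v ih =>
    intro s t h
    simp only [PreMealy.runFrom] at h ⊢
    cases hstep : P.step s p with
    | none => rw [hstep] at h; simp at h
    | some s' =>
      rw [hstep] at h
      have h1 : P.trans s p.1 = some (p.2, s') := (step_eq_some_iff P s p s').1 hstep
      have h2 : Mc.trans (Φ s) p.1 = some (p.2, Φ s') := (hΦ s p.1 p.2 s').1 h1
      have h3 : Mc.step (Φ s) p = some (Φ s') := (step_eq_some_iff Mc (Φ s) p (Φ s')).2 h2
      rw [h3]
      exact ih s' t h

/-! ### detTransFun lemmas -/

noncomputable def predF [Fintype Q] (A : UCB σ Q) (f : Q → ℤ) (a : σ) (q : Q) : Finset Q :=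
  Finset.univ.filter fun q' => q ∈ A.δ q' a ∧ 0 ≤ f q'

lemma detTransFun_def [Fintype Q] (A : UCB σ Q) (k : ℕ) (f : Q → ℤ) (a : σ) (q : Q) :
    detTransFun A k f a q =
      if h : (predF A f a q).Nonempty then
        min ((predF A f a q).sup' h f + (if A.col1 q then 1 else 0)) ((k : ℤ) + 1)
      else -1 := rfl

lemma mem_predF [Fintype Q] (A : UCB σ Q) {f : Q → ℤ} {a : σ} {q q' : Q} :
    q' ∈ predF A f a q ↔ q ∈ A.δ q' a ∧ 0 ≤ f q' := by simp [predF]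

lemma detTransFun_ge [Fintype Q] (A : UCB σ Q) (k : ℕ) (f : Q → ℤ) (a : σ) (q : Q) :
    -1 ≤ detTransFun A k f a q := by
  rw [detTransFun_def]
  split
  · next h =>
    obtain ⟨q', hq'⟩ := h
    have h0 : (0 : ℤ) ≤ f q' := ((mem_predF A).1 hq').2
    have h1 := Finset.le_sup' f hq'
    have hx : (0:ℤ) ≤ (if A.col1 q then (1:ℤ) else 0) := by split <;> omega
    have : (0:ℤ) ≤ (predF A f a q).sup' ⟨q', hq'⟩ f + (if A.col1 q then (1:ℤ) else 0) := by omega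
    refine le_min (by omega) (by omega)
  · omega

lemma detTransFun_le [Fintype Q] (A : UCB σ Q) (k : ℕ) (f : Q → ℤ) (a : σ) (q : Q) :
    detTransFun A k f a q ≤ (k : ℤ) + 1 := by
  rw [detTransFun_def]
  split
  · exact min_le_right _ _
  · omega

lemma detTransFun_mono [Fintype Q] (A : UCB σ Q) (k : ℕ) {f g : Q → ℤ} (hfg : f ≤ g)
    (a : σ) (q : Q) : detTransFun A k f a q ≤ detTransFun A k g a q := by
  have hsub : predF A f a q ⊆ predF A g a q := by
    intro q' h
    rw [mem_predF] at h ⊢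
    exact ⟨h.1, le_trans h.2 (hfg q')⟩
  rw [detTransFun_def]
  split
  · next h =>
    have hg : (predF A g a q).Nonempty := h.mono hsub
    rw [detTransFun_def, dif_pos hg]
    refine min_le_min (add_le_add_left ?_ _) le_rfl
    refine Finset.sup'_le h f fun q' hq' => ?_
    exact le_trans (hfg q') (Finset.le_sup' g (hsub hq'))
  · exact detTransFun_ge A k g a q

lemma detTransFun_bot [Fintype Q] (A : UCB σ Q) (k : ℕ) (a : σ) (q : Q) :
    detTransFun A k (fun _ => (-1 : ℤ)) a q = -1 := by
  rw [detTransFun_def, dif_neg]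
  rintro ⟨q', hq'⟩
  have := ((mem_predF A).1 hq').2
  omega

lemma detTransFun_sup' [Fintype Q] (A : UCB σ Q) (k : ℕ) {ι : Type} (s : Finset ι)
    (H : s.Nonempty) (g : ι → Q → ℤ) (a : σ) :
    detTransFun A k (s.sup' H g) a = s.sup' H (fun i => detTransFun A k (g i) a) := by
  funext q
  rw [Finset.sup'_apply]
  apply _root_.le_antisymm
  · rw [detTransFun_def]
    split
    · next h =>
      obtain ⟨q0, hq0mem, hq0⟩ := Finset.exists_mem_eq_sup' h (s.sup' H g)
      have happ : (s.sup' H g) q0 = s.sup' H (fun i => g i q0) := Finset.sup'_apply H g q0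
      obtain ⟨i0, hi0mem, hi0⟩ := Finset.exists_mem_eq_sup' H (fun i => g i q0)
      have hq0p := (mem_predF A).1 hq0mem
      have h0 : (0 : ℤ) ≤ g i0 q0 := by rw [← hi0, ← happ]; exact hq0p.2
      have hmem' : q0 ∈ predF A (g i0) a q := (mem_predF A).2 ⟨hq0p.1, h0⟩
      have hne' : (predF A (g i0) a q).Nonempty := ⟨q0, hmem'⟩
      refine le_trans ?_ (Finset.le_sup' (fun i => detTransFun A k (g i) a q) hi0mem)
      rw [detTransFun_def, dif_pos hne']
      refine min_le_min (add_le_add_left ?_ _) le_rfl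
      calc (predF A (s.sup' H g) a q).sup' h (s.sup' H g) = (s.sup' H g) q0 := hq0
        _ = g i0 q0 := by rw [happ, hi0]
        _ ≤ (predF A (g i0) a q).sup' hne' (g i0) := Finset.le_sup' _ hmem'
    · next h =>
      obtain ⟨i, hi⟩ := H
      exact le_trans (detTransFun_ge A k (g i) a q)
        (Finset.le_sup' (fun i => detTransFun A k (g i) a q) hi)
  · refine Finset.sup'_le H _ fun i hi => ?_
    exact detTransFun_mono A k (Finset.le_sup' g hi) a q

/-! ### detRun / detPostW lemmas -/

lemma detRun_zero [Fintype Q] (A : UCB σ Q) (k : ℕ) (f : Q → ℤ) (w : ℕ → σ) :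
    detRun A k f w 0 = f := rfl

lemma detRun_succ [Fintype Q] (A : UCB σ Q) (k : ℕ) (f : Q → ℤ) (w : ℕ → σ) (n : ℕ) :
    detRun A k f w (n + 1) = detTransFun A k (detRun A k f w n) (w n) := rfl

lemma detPostW_append [Fintype Q] (A : UCB σ Q) (k : ℕ) (u v : List σ) :
    ∀ f, detPostW A k f (u ++ v) = detPostW A k (detPostW A k f u) v := by
  induction u with
  | nil => intro f; simp [detPostW]
  | cons a u ih => intro f; simp [detPostW, ih]

lemma detPostW_mono [Fintype Q] (A : UCB σ Q) (k : ℕ) (u : List σ) :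
    ∀ {f g : Q → ℤ}, f ≤ g → detPostW A k f u ≤ detPostW A k g u := by
  induction u with
  | nil => intro f g h; exact h
  | cons a u ih =>
    intro f g h
    exact ih (fun q => detTransFun_mono A k h a q)

lemma detPostW_box [Fintype Q] (A : UCB σ Q) (k : ℕ) (u : List σ) :
    ∀ {f : Q → ℤ}, (∀ q, -1 ≤ f q ∧ f q ≤ (k : ℤ) + 1) →
      ∀ q, -1 ≤ detPostW A k f u q ∧ detPostW A k f u q ≤ (k : ℤ) + 1 := by
  induction u with
  | nil => intro f h; exact h
  | cons a u ih =>
    intro f _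
    exact ih (fun q => ⟨detTransFun_ge A k f a q, detTransFun_le A k f a q⟩)

lemma detRun_bot [Fintype Q] (A : UCB σ Q) (k : ℕ) (w : ℕ → σ) (n : ℕ) :
    detRun A k (fun _ => (-1 : ℤ)) w n = fun _ => (-1 : ℤ) := by
  induction n with
  | zero => rfl
  | succ n ih =>
    rw [detRun_succ, ih]
    exact funext fun q => detTransFun_bot A k (w n) q

lemma detRun_mono [Fintype Q] (A : UCB σ Q) (k : ℕ) {f g : Q → ℤ} (h : f ≤ g)
    (w : ℕ → σ) (n : ℕ) : detRun A k f w n ≤ detRun A k g w n := by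
  induction n with
  | zero => exact h
  | succ n ih => exact fun q => detTransFun_mono A k ih (w n) q

lemma detRun_sup' [Fintype Q] (A : UCB σ Q) (k : ℕ) {ι : Type} (s : Finset ι)
    (H : s.Nonempty) (g : ι → Q → ℤ) (w : ℕ → σ) (n : ℕ) :
    detRun A k (s.sup' H g) w n = s.sup' H (fun i => detRun A k (g i) w n) := by
  induction n with
  | zero => simp [detRun_zero]
  | succ n ih => rw [detRun_succ, ih, detTransFun_sup']; rfl

lemma detRun_add [Fintype Q] (A : UCB σ Q) (k : ℕ) (f : Q → ℤ) (w : ℕ → σ) (n₀ : ℕ) :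
    ∀ n, detRun A k f w (n₀ + n) = detRun A k (detRun A k f w n₀) (fun j => w (n₀ + j)) n := by
  intro n
  induction n with
  | zero => rfl
  | succ n ih => rw [← Nat.add_assoc, detRun_succ, detRun_succ, ih]

lemma initCF_box (A : UCB σ Q) (k : ℕ) (q : Q) :
    -1 ≤ initCF A q ∧ initCF A q ≤ (k : ℤ) + 1 := by
  unfold initCF
  split <;> [skip; omega]
  split <;> omega

/-! ### interleave / flattenWord / wcat lemmas -/

lemma interleave_two_mul (w : ℕ → I × O) (j : ℕ) :
    interleave w (2 * j) = Sum.inl (w j).1 := by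
  have h1 : (2 * j) % 2 = 0 := by omega
  have h2 : 2 * j / 2 = j := by omega
  simp [_root_.interleave, h1, h2]

lemma interleave_two_mul_add_one (w : ℕ → I × O) (j : ℕ) :
    interleave w (2 * j + 1) = Sum.inr (w j).2 := by
  have h1 : (2 * j + 1) % 2 = 1 := by omega
  have h2 : (2 * j + 1) / 2 = j := by omega
  simp [_root_.interleave, h1, h2]

lemma flattenWord_append (u v : List (I × O)) :
    flattenWord (u ++ v) = flattenWord u ++ flattenWord v := by
  simp [flattenWord]

lemma flattenWord_singleton (p : I × O) :
    flattenWord [p] = [Sum.inl p.1, Sum.inr p.2] := by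
  simp [flattenWord]

lemma detRun_interleave [Fintype Q] (A : UCB (I ⊕ O) Q) (k : ℕ) (f : Q → ℤ)
    (w : ℕ → I × O) : ∀ j, detRun A k f (interleave w) (2 * j)
      = detPostW A k f (flattenWord ((List.range j).map w)) := by
  intro j
  induction j with
  | zero => simp [detRun_zero, detPostW, flattenWord]
  | succ j ih =>
    have h2 : 2 * (j + 1) = (2 * j + 1) + 1 := by ring
    rw [h2, detRun_succ, detRun_succ, ih, interleave_two_mul, interleave_two_mul_add_one,
      List.range_succ, List.map_append, flattenWord_append, detPostW_append]
    simp [flattenWord, detPostW]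

noncomputable def wcat {α : Type} (u : List α) (w : ℕ → α) : ℕ → α :=
  fun n => if h : n < u.length then u.get ⟨n, h⟩ else w (n - u.length)

lemma map_wcat_range_le {α : Type} (u : List α) (w : ℕ → α) {n : ℕ} (h : n ≤ u.length) :
    (List.range n).map (wcat u w) = u.take n := by
  apply List.ext_getElem
  · simp; omega
  · intro i h1 h2
    simp only [List.getElem_map, List.getElem_range, List.getElem_take]
    have hi : i < u.length := by simp at h1; omega
    simp [wcat, hi]

lemma map_wcat_range_add {α : Type} (u : List α) (w : ℕ → α) (n : ℕ) :
    (List.range (u.length + n)).map (wcat u w) = u ++ (List.range n).map w := by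
  induction n with
  | zero =>
    simpa using map_wcat_range_le u w (le_refl u.length)
  | succ n ih =>
    have h1 : u.length + (n + 1) = (u.length + n) + 1 := by omega
    rw [h1, List.range_succ, List.map_append, ih, List.range_succ, List.map_append]
    have h2 : wcat u w (u.length + n) = w n := by
      unfold wcat
      rw [dif_neg (by omega)]
      congr 1
      omega
    simp [h2]

lemma interleave_wcat (u : List (I × O)) (w : ℕ → I × O) (j : ℕ) :
    interleave (wcat u w) (2 * u.length + j) = interleave w j := by
  unfold _root_.interleave
  have h1 : (2 * u.length + j) % 2 = j % 2 := by omega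
  have h2 : (2 * u.length + j) / 2 = u.length + j / 2 := by omega
  rw [h1, h2]
  have h3 : wcat u w (u.length + j / 2) = w (j / 2) := by
    unfold wcat
    rw [dif_neg (by omega)]
    congr 1
    omega
  rw [h3]

lemma detRun_wcat [Fintype Q] (A : UCB (I ⊕ O) Q) (k : ℕ) (f : Q → ℤ)
    (u : List (I × O)) (w : ℕ → I × O) (n : ℕ) :
    detRun A k f (interleave (wcat u w)) (2 * u.length + n)
      = detRun A k (detPostW A k f (flattenWord u)) (interleave w) n := by
  have e1 : detRun A k f (interleave (wcat u w)) (2 * u.length)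
      = detPostW A k f (flattenWord u) := by
    rw [detRun_interleave, map_wcat_range_le u w le_rfl, List.take_length]
  have e2 : (fun j => interleave (wcat u w) (2 * u.length + j)) = interleave w :=
    funext (interleave_wcat u w)
  rw [detRun_add, e1, e2]

end Stmt15Aux


section Stmt15Aux2

open List

variable {I O M Q : Type}

/-! ### Infinite runs of total machines -/

noncomputable def machNext {N : Type} (Mc : PreMealy I O N) (ht : Mc.Total)
    (s : N) (i : I) : O × N :=
  (Mc.trans s i).get (ht s i)

lemma machNext_trans {N : Type} (Mc : PreMealy I O N) (ht : Mc.Total) (s : N) (i : I) :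
    Mc.trans s i = some (machNext Mc ht s i) := (Option.some_get (ht s i)).symm

noncomputable def machStates {N : Type} (Mc : PreMealy I O N) (ht : Mc.Total)
    (s0 : N) (inp : ℕ → I) : ℕ → N
  | 0 => s0
  | n + 1 => (machNext Mc ht (machStates Mc ht s0 inp n) (inp n)).2

noncomputable def machWord {N : Type} (Mc : PreMealy I O N) (ht : Mc.Total)
    (s0 : N) (inp : ℕ → I) : ℕ → I × O :=
  fun n => (inp n, (machNext Mc ht (machStates Mc ht s0 inp n) (inp n)).1)

lemma machWord_run {N : Type} (Mc : PreMealy I O N) (ht : Mc.Total) (s0 : N) (inp : ℕ → I) :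
    ∀ n, Mc.runFrom s0 ((List.range n).map (machWord Mc ht s0 inp))
      = some (machStates Mc ht s0 inp n) := by
  intro n
  induction n with
  | zero => rfl
  | succ n ih =>
    rw [List.range_succ, List.map_append, runFrom_append, ih]
    have hstep : Mc.step (machStates Mc ht s0 inp n) (machWord Mc ht s0 inp n)
        = some (machStates Mc ht s0 inp (n + 1)) := by
      rw [step_eq_some_iff]
      show Mc.trans _ (inp n) = _
      rw [machNext_trans Mc ht _ (inp n)]
      rfl
    simp [runFrom_singleton, hstep]

lemma wcat_mem_omega {N : Type} (Mc : PreMealy I O N) {u : List (I × O)} {s : N}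
    (hs : Mc.runFrom Mc.init u = some s) {w : ℕ → I × O}
    (hw : ∀ n, (Mc.runFrom s ((List.range n).map w)).isSome) :
    wcat u w ∈ Mc.omegaLang := by
  intro n
  show (Mc.runFrom Mc.init ((List.range n).map (wcat u w))).isSome
  rcases le_or_gt n u.length with h | h
  · rw [map_wcat_range_le u w h]
    exact runFrom_take_isSome Mc hs n
  · have hn : n = u.length + (n - u.length) := by omega
    rw [hn, map_wcat_range_add, runFrom_append, hs]
    exact hw _

lemma exists_omega_word [Nonempty I] {N : Type} (Mc : PreMealy I O N) (ht : Mc.Total)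
    (u : List (I × O)) {s : N} (hs : Mc.runFrom Mc.init u = some s) (i : I) :
    ∃ w ∈ Mc.omegaLang, ((List.range u.length).map w = u) ∧ (w u.length).1 = i := by
  set inp : ℕ → I := fun n => if n = 0 then i else Classical.arbitrary I with hinp
  refine ⟨wcat u (machWord Mc ht s inp), ?_, ?_, ?_⟩
  · refine wcat_mem_omega Mc hs fun n => ?_
    rw [machWord_run Mc ht s inp n]
    simp
  · rw [map_wcat_range_le u _ le_rfl, List.take_length]
  · show (wcat u (machWord Mc ht s inp) u.length).1 = i
    unfold wcat
    rw [dif_neg (lt_irrefl _)]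
    simp [machWord, hinp]

/-! ### The key safety lemma -/

lemma safe_along [Fintype Q] [Nonempty I] {N : Type} (Mc : PreMealy I O N)
    (ht : Mc.Total) (A : UCB (I ⊕ O) Q) (k : ℕ) (f : Q → ℤ)
    (hbox : ∀ q, -1 ≤ f q ∧ f q ≤ (k : ℤ) + 1)
    (hreal : ∀ w ∈ Mc.omegaLang, interleave w ∈ langD A k f)
    {u : List (I × O)} {s : N} (hs : Mc.runFrom Mc.init u = some s) (i : I) :
    (∀ q, detPostW A k f (flattenWord u) q ≤ (k : ℤ)) ∧
    (∀ q, detTransFun A k (detPostW A k f (flattenWord u)) (Sum.inl i) q ≤ (k : ℤ)) := by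
  obtain ⟨w, hw, hpre, hi⟩ := exists_omega_word Mc ht u hs i
  have hL : ∀ n, ¬ ∃ q, detRun A k f (interleave w) n q = (k : ℤ) + 1 := hreal w hw
  have e0 : detRun A k f (interleave w) (2 * u.length) = detPostW A k f (flattenWord u) := by
    rw [detRun_interleave, hpre]
  constructor
  · intro q
    have h1 := hL (2 * u.length)
    rw [e0] at h1
    have h2 := (detPostW_box A k (flattenWord u) hbox q).2
    have h3 : detPostW A k f (flattenWord u) q ≠ (k : ℤ) + 1 := fun hc => h1 ⟨q, hc⟩
    omega
  · intro q
    have h1 := hL (2 * u.length + 1)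
    rw [detRun_succ, e0] at h1
    have hl : interleave w (2 * u.length) = Sum.inl i := by
      rw [interleave_two_mul, hi]
    rw [hl] at h1
    have h2 := detTransFun_le A k (detPostW A k f (flattenWord u)) (Sum.inl i) q
    have h3 : detTransFun A k (detPostW A k f (flattenWord u)) (Sum.inl i) q ≠ (k : ℤ) + 1 :=
      fun hc => h1 ⟨q, hc⟩
    omega

/-! ### Fstar as a finite sup -/

variable [Fintype Q]

noncomputable def TSet (P : PreMealy I O M) (A : UCB (I ⊕ O) Q) (k : ℕ) (m : M) :
    Set (Q → ℤ) :=
  insert (fun _ => (-1 : ℤ))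
    { g | ∃ u ∈ P.leftLang m, detPostW A k (initCF A) (flattenWord u) = g }

lemma TSet_finite (P : PreMealy I O M) (A : UCB (I ⊕ O) Q) (k : ℕ) (m : M) :
    (TSet P A k m).Finite := by
  apply Set.Finite.subset (Set.finite_Icc (fun _ => (-1 : ℤ)) (fun _ => (k : ℤ) + 1))
  rintro g (rfl | ⟨u, hu, rfl⟩)
  · exact Set.mem_Icc.2 ⟨le_rfl, fun q => by simp; omega⟩
  · refine Set.mem_Icc.2 ⟨fun q => ?_, fun q => ?_⟩
    · exact (detPostW_box A k (flattenWord u) (initCF_box A k) q).1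
    · exact (detPostW_box A k (flattenWord u) (initCF_box A k) q).2

noncomputable def TFin (P : PreMealy I O M) (A : UCB (I ⊕ O) Q) (k : ℕ) (m : M) :
    Finset (Q → ℤ) := (TSet_finite P A k m).toFinset

lemma mem_TFin {P : PreMealy I O M} {A : UCB (I ⊕ O) Q} {k : ℕ} {m : M} {g : Q → ℤ} :
    g ∈ TFin P A k m ↔ g ∈ TSet P A k m := Set.Finite.mem_toFinset _

lemma TFin_nonempty (P : PreMealy I O M) (A : UCB (I ⊕ O) Q) (k : ℕ) (m : M) :
    (TFin P A k m).Nonempty :=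
  ⟨fun _ => (-1 : ℤ), mem_TFin.2 (Set.mem_insert _ _)⟩

lemma Fstar_eq_sup' (P : PreMealy I O M) (A : UCB (I ⊕ O) Q) (k : ℕ) (m : M) :
    Fstar P A k m = (TFin P A k m).sup' (TFin_nonempty P A k m) id := by
  funext q
  rw [Finset.sup'_apply, Finset.sup'_eq_csSup_image]
  show sSup _ = _
  congr 1
  rw [show ((TFin P A k m : Finset (Q → ℤ)) : Set (Q → ℤ)) = TSet P A k m from
    Set.Finite.coe_toFinset _]
  ext z
  simp only [Set.mem_insert_iff, Set.mem_setOf_eq, Set.mem_image, TSet, id]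
  constructor
  · rintro (rfl | ⟨u, hu, hz⟩)
    · exact ⟨fun _ => (-1 : ℤ), Or.inl rfl, rfl⟩
    · exact ⟨_, Or.inr ⟨u, hu, rfl⟩, hz⟩
  · rintro ⟨g, (rfl | ⟨u, hu, rfl⟩), rfl⟩
    · exact Or.inl rfl
    · exact Or.inr ⟨u, hu, rfl⟩

lemma bddAbove_Fstar_set (P : PreMealy I O M) (A : UCB (I ⊕ O) Q) (k : ℕ) (m : M) (q : Q) :
    BddAbove (insert (-1 : ℤ)
      { z | ∃ u ∈ P.leftLang m, detPostW A k (initCF A) (flattenWord u) q = z }) := by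
  refine ⟨(k : ℤ) + 1, ?_⟩
  rintro z (rfl | ⟨u, hu, rfl⟩)
  · omega
  · exact (detPostW_box A k (flattenWord u) (initCF_box A k) q).2

lemma le_Fstar {P : PreMealy I O M} {A : UCB (I ⊕ O) Q} {k : ℕ} {m : M}
    {u : List (I × O)} (hu : u ∈ P.leftLang m) :
    detPostW A k (initCF A) (flattenWord u) ≤ Fstar P A k m := by
  intro q
  exact le_csSup (bddAbove_Fstar_set P A k m q)
    (Set.mem_insert_of_mem _ ⟨u, hu, rfl⟩)

lemma Fstar_box (P : PreMealy I O M) (A : UCB (I ⊕ O) Q) (k : ℕ) (m : M) (q : Q) :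
    -1 ≤ Fstar P A k m q ∧ Fstar P A k m q ≤ (k : ℤ) + 1 := by
  constructor
  · exact le_csSup (bddAbove_Fstar_set P A k m q) (Set.mem_insert _ _)
  · refine csSup_le ⟨-1, Set.mem_insert _ _⟩ ?_
    rintro z (rfl | ⟨u, hu, rfl⟩)
    · omega
    · exact (detPostW_box A k (flattenWord u) (initCF_box A k) q).2

end Stmt15Aux2


section Stmt15Aux3

open List

variable {I O M Q : Type}

lemma runFrom_congr_trans {P1 P2 : PreMealy I O M} (h : P1.trans = P2.trans) :
    P1.runFrom = P2.runFrom := by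
  have hstep : P1.step = P2.step := by
    funext s p
    unfold PreMealy.step
    rw [h]
  funext s u
  induction u generalizing s with
  | nil => rfl
  | cons p v ih =>
    simp only [PreMealy.runFrom, hstep]
    cases P2.step s p with
    | none => rfl
    | some s' => exact ih s'

/-! ### The composite machine -/

noncomputable def compMachine (P : PreMealy I O M) (Nt : M → Type)
    (Mc : ∀ m, PreMealy I O (Nt m)) : PreMealy I O (M ⊕ (Σ m, Nt m)) where
  init := Sum.inl P.init
  trans := fun s i =>
    match s with
    | Sum.inl m =>
      match P.trans m i with
      | some p => some (p.1, Sum.inl p.2)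
      | none => ((Mc m).trans (Mc m).init i).map fun p => (p.1, Sum.inr ⟨m, p.2⟩)
    | Sum.inr x => ((Mc x.1).trans x.2 i).map fun p => (p.1, Sum.inr ⟨x.1, p.2⟩)

lemma comp_trans_inl_some {P : PreMealy I O M} {Nt : M → Type} {Mc : ∀ m, PreMealy I O (Nt m)}
    {m : M} {i : I} {o : O} {m' : M} (hp : P.trans m i = some (o, m')) :
    (compMachine P Nt Mc).trans (Sum.inl m) i = some (o, Sum.inl m') := by
  simp [compMachine, hp]

lemma comp_trans_inl_none {P : PreMealy I O M} {Nt : M → Type} {Mc : ∀ m, PreMealy I O (Nt m)}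
    {m : M} {i : I} (hp : P.trans m i = none) :
    (compMachine P Nt Mc).trans (Sum.inl m) i
      = ((Mc m).trans (Mc m).init i).map fun p => (p.1, Sum.inr ⟨m, p.2⟩) := by
  simp [compMachine, hp]

lemma comp_trans_inr {P : PreMealy I O M} {Nt : M → Type} {Mc : ∀ m, PreMealy I O (Nt m)}
    {m : M} {nst : Nt m} {i : I} :
    (compMachine P Nt Mc).trans (Sum.inr ⟨m, nst⟩) i
      = ((Mc m).trans nst i).map fun p => (p.1, Sum.inr ⟨m, p.2⟩) := rfl

lemma comp_total (P : PreMealy I O M) (Nt : M → Type) (Mc : ∀ m, PreMealy I O (Nt m))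
    (ht : ∀ m, (Mc m).Total) : (compMachine P Nt Mc).Total := by
  rintro (m | ⟨m, nst⟩) i
  · cases hp : P.trans m i with
    | some po =>
      obtain ⟨o, m'⟩ := po
      rw [comp_trans_inl_some hp]
      rfl
    | none =>
      rw [comp_trans_inl_none hp]
      have := ht m (Mc m).init i
      cases hm : (Mc m).trans (Mc m).init i with
      | none => rw [hm] at this; simp at this
      | some po => rfl
  · rw [comp_trans_inr]
    have := ht m nst i
    cases hm : (Mc m).trans nst i with
    | none => rw [hm] at this; simp at this
    | some po => rfl

lemma comp_subgraph (P : PreMealy I O M) (Nt : M → Type) (Mc : ∀ m, PreMealy I O (Nt m)) :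
    Subgraph P (compMachine P Nt Mc) := by
  refine ⟨Sum.inl, Sum.inl_injective, rfl, ?_⟩
  intro p i o q
  constructor
  · intro hp
    exact comp_trans_inl_some hp
  · intro hc
    cases hp : P.trans p i with
    | some po =>
      obtain ⟨o', q'⟩ := po
      rw [comp_trans_inl_some hp] at hc
      simp only [Option.some.injEq, Prod.mk.injEq] at hc
      obtain ⟨rfl, hq⟩ := hc
      rw [Sum.inl_injective hq]
    | none =>
      rw [comp_trans_inl_none hp] at hc
      cases hm : (Mc p).trans (Mc p).init i with
      | none => rw [hm] at hc; simp at hc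
      | some po => rw [hm] at hc; simp at hc

lemma comp_run_struct (P : PreMealy I O M) (Nt : M → Type) (Mc : ∀ m, PreMealy I O (Nt m)) :
    ∀ (u : List (I × O)) (s : M ⊕ (Σ m, Nt m)),
      (compMachine P Nt Mc).runFrom (compMachine P Nt Mc).init u = some s →
      (∃ m : M, s = Sum.inl m ∧ P.runFrom P.init u = some m) ∨
      (∃ (m : M) (nst : Nt m) (u₁ u₂ : List (I × O)), s = Sum.inr ⟨m, nst⟩ ∧
        u = u₁ ++ u₂ ∧ P.runFrom P.init u₁ = some m ∧
        (Mc m).runFrom (Mc m).init u₂ = some nst) := by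
  intro u
  induction u using List.reverseRecOn with
  | nil =>
    intro s hs
    simp only [PreMealy.runFrom, Option.some.injEq] at hs
    exact Or.inl ⟨P.init, hs.symm, rfl⟩
  | append_singleton u p ih =>
    intro s hs
    rw [runFrom_append] at hs
    cases ht : (compMachine P Nt Mc).runFrom (compMachine P Nt Mc).init u with
    | none => rw [ht] at hs; simp at hs
    | some t =>
      rw [ht] at hs
      simp only [Option.bind_some] at hs
      rw [runFrom_singleton, step_eq_some_iff] at hs
      rcases ih t ht with ⟨m, rfl, hPm⟩ | ⟨m, nst, u₁, u₂, rfl, rfl, hP1, hM2⟩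
      · cases hp : P.trans m p.1 with
        | some po =>
          obtain ⟨o, m'⟩ := po
          rw [comp_trans_inl_some hp] at hs
          simp only [Option.some.injEq, Prod.mk.injEq] at hs
          obtain ⟨ho, hss⟩ := hs
          refine Or.inl ⟨m', hss.symm, ?_⟩
          rw [runFrom_append, hPm, Option.bind_some, runFrom_singleton, step_eq_some_iff]
          rw [hp, ho]
        | none =>
          rw [comp_trans_inl_none hp] at hs
          cases hm : (Mc m).trans (Mc m).init p.1 with
          | none => rw [hm] at hs; simp at hs
          | some po =>
            obtain ⟨o, n'⟩ := po
            rw [hm] at hs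
            simp only [Option.map_some, Option.some.injEq, Prod.mk.injEq] at hs
            obtain ⟨ho, hss⟩ := hs
            refine Or.inr ⟨m, n', u, [p], hss.symm, rfl, hPm, ?_⟩
            rw [runFrom_singleton, step_eq_some_iff, hm, ho]
      · rw [comp_trans_inr] at hs
        cases hm : (Mc m).trans nst p.1 with
        | none => rw [hm] at hs; simp at hs
        | some po =>
          obtain ⟨o, n'⟩ := po
          rw [hm] at hs
          simp only [Option.map_some, Option.some.injEq, Prod.mk.injEq] at hs
          obtain ⟨ho, hss⟩ := hs
          refine Or.inr ⟨m, n', u₁, u₂ ++ [p], hss.symm, by rw [List.append_assoc], hP1, ?_⟩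
          rw [runFrom_append, hM2, Option.bind_some, runFrom_singleton, step_eq_some_iff, hm, ho]

end Stmt15Aux3


/-- `L(D(A,k))` is `P`-realizable iff for every state `m` of `P`, the
counting function `F*(m)` belongs to `W_k^A` (i.e. is a counting function whose
associated safety language is realizable). -/
theorem stmt15 {I O M Q : Type} [Fintype I] [Nonempty I] [Fintype O] [Nonempty O]
    [Fintype M] [Fintype Q] [Nonempty Q]
    (P : PreMealy I O M) (A : UCB (I ⊕ O) Q) (k : ℕ) :
    PRealizable P { w | interleave w ∈ langD A k (initCF A) } ↔
      ∀ m : M, Fstar P A k m ∈ CFset Q k ∧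
        RealizableSigma I O (langD A k (Fstar P A k m)) := by
  constructor
  · -- forward direction
    rintro ⟨N, hN, Mc, htot, ⟨Φ, hinj, hinit, htr⟩, hlang⟩ m
    refine ⟨fun q => Fstar_box P A k m q, ?_⟩
    refine ⟨N, hN, ⟨Φ m, Mc.trans⟩, htot, ?_⟩
    intro w hw
    intro n
    rintro ⟨q, hq⟩
    rw [Fstar_eq_sup' P A k m, detRun_sup'] at hq
    rw [Finset.sup'_apply] at hq
    obtain ⟨g0, hg0mem, hg0⟩ := Finset.exists_mem_eq_sup' (TFin_nonempty P A k m)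
      (fun g => detRun A k (id g) (interleave w) n q)
    rw [hg0] at hq
    simp only [id_eq] at hq
    rcases mem_TFin.1 hg0mem with rfl | ⟨u, hu, rfl⟩
    · rw [detRun_bot] at hq
      have : ((k : ℤ) + 1) = -1 := hq.symm
      omega
    · have hrun0 : Mc.runFrom (Φ P.init) u = some (Φ m) :=
        runFrom_of_subgraph htr u P.init m hu
      rw [hinit] at hrun0
      have hrfeq : (PreMealy.mk (Φ m) Mc.trans : PreMealy I O N).runFrom = Mc.runFrom :=
        runFrom_congr_trans rfl
      have hw' : ∀ n', (Mc.runFrom (Φ m) ((List.range n').map w)).isSome := by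
        intro n'
        have := hw n'
        rwa [show (PreMealy.mk (Φ m) Mc.trans : PreMealy I O N).lang
            = { v | (Mc.runFrom (Φ m) v).isSome } by
          unfold PreMealy.lang; rw [hrfeq]] at this
      have hw2 : wcat u w ∈ Mc.omegaLang := wcat_mem_omega Mc hrun0 hw'
      have hsafe : ∀ n', ¬ ∃ q, detRun A k (initCF A) (interleave (wcat u w)) n' q
          = (k : ℤ) + 1 := hlang hw2
      refine hsafe (2 * u.length + n) ⟨q, ?_⟩
      rw [detRun_wcat]
      exact hq
  · -- backward direction
    intro h
    have h2 : ∀ m : M, ∃ (N : Type) (_ : Fintype N) (Mach : PreMealy I O N),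
        Mach.Total ∧ ∀ w ∈ Mach.omegaLang, interleave w ∈ langD A k (Fstar P A k m) :=
      fun m => (h m).2
    choose Nt instN Mc htot hlang using h2
    haveI : ∀ m, Fintype (Nt m) := instN
    refine ⟨M ⊕ (Σ m, Nt m), inferInstance, compMachine P Nt Mc,
      comp_total P Nt Mc htot, comp_subgraph P Nt Mc, ?_⟩
    intro w hw
    have hpref : ∀ j, ((compMachine P Nt Mc).runFrom (compMachine P Nt Mc).init
        ((List.range j).map w)).isSome := hw
    have key : ∀ j, (∀ q, detRun A k (initCF A) (interleave w) (2 * j) q ≤ (k : ℤ)) ∧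
        (∀ q, detRun A k (initCF A) (interleave w) (2 * j + 1) q ≤ (k : ℤ)) := by
      intro j
      obtain ⟨s, hs⟩ := Option.isSome_iff_exists.1 (hpref j)
      have decomp : ∃ (m : M) (u₁ u₂ : List (I × O)) (nst : Nt m),
          (List.range j).map w = u₁ ++ u₂ ∧ P.runFrom P.init u₁ = some m ∧
          (Mc m).runFrom (Mc m).init u₂ = some nst := by
        rcases comp_run_struct P Nt Mc _ s hs with ⟨m, _, hPm⟩ |
          ⟨m, nst, u₁, u₂, _, hu, hP1, hM2⟩
        · exact ⟨m, (List.range j).map w, [], (Mc m).init, (List.append_nil _).symm, hPm, rfl⟩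
        · exact ⟨m, u₁, u₂, nst, hu, hP1, hM2⟩
      obtain ⟨m, u₁, u₂, nst, hsplit, hP1, hM2⟩ := decomp
      have hmono : detRun A k (initCF A) (interleave w) (2 * j)
          ≤ detPostW A k (Fstar P A k m) (flattenWord u₂) := by
        rw [detRun_interleave, hsplit, flattenWord_append, detPostW_append]
        exact detPostW_mono A k _ (le_Fstar hP1)
      have hS := fun i => safe_along (Mc m) (htot m) A k (Fstar P A k m)
        (Fstar_box P A k m) (hlang m) hM2 i
      constructor
      · intro q
        exact le_trans (hmono q) ((hS (Classical.arbitrary I)).1 q)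
      · intro q
        have e : detRun A k (initCF A) (interleave w) (2 * j + 1)
            = detTransFun A k (detRun A k (initCF A) (interleave w) (2 * j))
              (Sum.inl (w j).1) := by
          rw [detRun_succ, interleave_two_mul]
        rw [e]
        exact le_trans (detTransFun_mono A k hmono (Sum.inl (w j).1) q) ((hS (w j).1).2 q)
    intro n'
    rintro ⟨q, hq⟩
    rcases Nat.even_or_odd n' with ⟨j, hj⟩ | ⟨j, hj⟩
    · have hb := (key j).1 q
      rw [show n' = 2 * j by omega] at hq
      omega
    · have hb := (key j).2 q
      rw [show n' = 2 * j + 1 by omega] at hq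
      omega
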